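/- Let (X_s) be independent random variables in [0,1] with mean μ_{a*}, let μ_0 ≤ μ_{a*} be a threshold, and let μ̂(s) be the mean of the first s variables. Then ∑_{t=1}^{∞} ∑_{s=1}^{t} P( μ̂(s) − μ_{a*} < μ_0 − μ_{a*} − sqrt(2·log(t)/s) ) ≤ π²/6. -/

import Mathlib

/-!
By Hoeffding's lemma each centred `X i` is sub-Gaussian with variance proxy `1/4`, so Hoeffding's
inequality bounds the probability that the mean of `s` of them falls `ε` below `μa` by
`exp (-2 s ε²)`. With `ε = √(2 log t / s)` this is `t⁻⁴`, uniformly in `s`; the `t` terms of the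
inner sum then contribute at most `t⁻³ ≤ t⁻²`, and `∑ t⁻² = π² / 6`.
-/

open MeasureTheory ProbabilityTheory Real

section Hoeffding

variable {Ω : Type*} [MeasurableSpace Ω] {μ : Measure Ω} [IsProbabilityMeasure μ]
  {X : ℕ → Ω → ℝ}

lemma measure_sum_range_le_sub_le (hindep : iIndepFun X μ) (hmeas : ∀ i, AEMeasurable (X i) μ)
    {a b : ℝ} (hbdd : ∀ i, ∀ᵐ ω ∂μ, X i ω ∈ Set.Icc a b) {m : ℝ} (hmean : ∀ i, μ[X i] = m)
    (n : ℕ) {ε : ℝ} (hε : 0 ≤ ε) :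
    μ {ω | ∑ i ∈ Finset.range n, X i ω ≤ n * m - ε}
      ≤ ENNReal.ofReal (exp (-2 * ε ^ 2 / (n * (b - a) ^ 2))) := by
  set Y : ℕ → Ω → ℝ := fun i ω ↦ -(X i ω - m)
  have hY : ∀ i < n, HasSubgaussianMGF (Y i) ((‖b - a‖₊ / 2) ^ 2) μ := fun i _ ↦ by
    simpa only [Y, hmean i, Pi.neg_def] using (hasSubgaussianMGF_of_mem_Icc (hmeas i) (hbdd i)).neg
  have hindepY : iIndepFun Y μ :=
    hindep.comp (fun _ x ↦ -(x - m)) fun _ ↦ (measurable_id.sub_const m).neg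
  have hevent : {ω | ∑ i ∈ Finset.range n, X i ω ≤ n * m - ε}
      = {ω | ε ≤ ∑ i ∈ Finset.range n, Y i ω} := by
    ext ω
    simp only [Set.mem_ofPred_eq, Y, Finset.sum_neg_distrib, Finset.sum_sub_distrib,
      Finset.sum_const, Finset.card_range, nsmul_eq_mul]
    constructor <;> intro h <;> linarith
  have hproxy : (((‖b - a‖₊ / 2) ^ 2 : NNReal) : ℝ) = (b - a) ^ 2 / 4 := by
    simp only [div_pow, NNReal.coe_div, NNReal.coe_pow, coe_nnnorm, norm_eq_abs, sq_abs,
      NNReal.coe_ofNat]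
    ring
  rw [hevent, ← ofReal_measureReal]
  refine ENNReal.ofReal_le_ofReal <|
    (HasSubgaussianMGF.measure_sum_range_ge_le_of_iIndepFun hindepY hY hε).trans_eq ?_
  rw [hproxy]
  congr 1
  field_simp
  ring

lemma measure_mean_lt_sub_sqrt_log_le (hindep : iIndepFun X μ)
    (hmeas : ∀ i, AEMeasurable (X i) μ) (hbdd : ∀ i, ∀ᵐ ω ∂μ, X i ω ∈ Set.Icc 0 1)
    {m : ℝ} (hmean : ∀ i, μ[X i] = m) {s : ℕ} (hs : 0 < s) {t : ℝ} (ht : 1 ≤ t) :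
    μ {ω | (∑ i ∈ Finset.range s, X i ω) / s < m - √(2 * log t / s)}
      ≤ ENNReal.ofReal (t ^ 4)⁻¹ := by
  have hs' : (0 : ℝ) < s := Nat.cast_pos.mpr hs
  set ε := s * √(2 * log t / s)
  have hε_sq : ε ^ 2 = 2 * s * log t := by
    rw [mul_pow, sq_sqrt (by have := log_nonneg ht; positivity)]
    field_simp
  have hevent : {ω | (∑ i ∈ Finset.range s, X i ω) / s < m - √(2 * log t / s)}
      ⊆ {ω | ∑ i ∈ Finset.range s, X i ω ≤ s * m - ε} := fun ω hω ↦ by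
    have := (div_lt_iff₀ hs').mp hω
    simp only [Set.mem_ofPred_eq, ε]
    linarith
  refine (measure_mono hevent).trans <|
    (measure_sum_range_le_sub_le hindep hmeas hbdd hmean s (by positivity)).trans_eq ?_
  rw [hε_sq, ← exp_log (by positivity : 0 < (t ^ 4)⁻¹), log_inv, log_pow]
  congr 2
  field_simp
  ring

end Hoeffding

lemma natCast_mul_inv_pow_four_le_one_div_sq (t : ℕ) :
    (t : ℝ) * ((t : ℝ) ^ 4)⁻¹ ≤ 1 / (t : ℝ) ^ 2 := by
  rcases Nat.eq_zero_or_pos t with rfl | ht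
  · simp
  have ht' : (1 : ℝ) ≤ t := Nat.one_le_cast.mpr ht
  rw [← div_eq_mul_inv, div_le_div_iff₀ (by positivity) (by positivity)]
  nlinarith [pow_le_pow_right₀ ht' (by norm_num : 3 ≤ 4)]

/-- The FT-UCB tail bound: for independent `[0,1]`-valued rewards with mean
`μa` and threshold `μ0 ≤ μa`, the summed probabilities that the empirical
mean falls below `μ0 − sqrt(2 log t / s)` are at most `π²/6`. -/
theorem ftucb_tail_bound
    {Ω : Type*} [MeasurableSpace Ω] (μ : Measure Ω) [IsProbabilityMeasure μ]
    (X : ℕ → Ω → ℝ)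
    (hmeas : ∀ s, Measurable (X s))
    (hindep : iIndepFun X μ)
    (hbdd : ∀ s ω, X s ω ∈ Set.Icc (0 : ℝ) 1)
    (μa : ℝ) (hmean : ∀ s, ∫ ω, X s ω ∂μ = μa)
    (μ0 : ℝ) (hμ0 : μ0 ≤ μa) :
    ∑' t : ℕ, ∑ s ∈ Finset.Icc 1 t,
        μ {ω | (∑ u ∈ Finset.range s, X u ω) / s - μa
                < μ0 - μa - Real.sqrt (2 * Real.log t / s)}
      ≤ ENNReal.ofReal (Real.pi ^ 2 / 6) := by
  have hterm : ∀ t s : ℕ, s ∈ Finset.Icc 1 t →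
      μ {ω | (∑ u ∈ Finset.range s, X u ω) / s - μa < μ0 - μa - √(2 * log t / s)}
        ≤ ENNReal.ofReal ((t : ℝ) ^ 4)⁻¹ := fun t s hs ↦ by
    obtain ⟨hs1, hst⟩ := Finset.mem_Icc.mp hs
    have hsub : {ω | (∑ u ∈ Finset.range s, X u ω) / s - μa < μ0 - μa - √(2 * log t / s)}
        ⊆ {ω | (∑ u ∈ Finset.range s, X u ω) / s < μa - √(2 * log t / s)} :=
      fun ω hω ↦ by simp only [Set.mem_ofPred_eq] at hω ⊢; linarith
    exact (measure_mono hsub).trans (measure_mean_lt_sub_sqrt_log_le hindep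
      (fun i ↦ (hmeas i).aemeasurable) (fun i ↦ ae_of_all _ (hbdd i)) hmean hs1
      (Nat.one_le_cast.mpr (hs1.trans hst)))
  have hrow : ∀ t : ℕ, ∑ s ∈ Finset.Icc 1 t,
      μ {ω | (∑ u ∈ Finset.range s, X u ω) / s - μa < μ0 - μa - √(2 * log t / s)}
        ≤ ENNReal.ofReal (1 / (t : ℝ) ^ 2) := fun t ↦
    calc _ ≤ ∑ _s ∈ Finset.Icc 1 t, ENNReal.ofReal ((t : ℝ) ^ 4)⁻¹ :=
          Finset.sum_le_sum (hterm t)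
      _ = ENNReal.ofReal (t * ((t : ℝ) ^ 4)⁻¹) := by
          rw [Finset.sum_const, Nat.card_Icc, add_tsub_cancel_right, nsmul_eq_mul,
            ENNReal.ofReal_mul (Nat.cast_nonneg t), ENNReal.ofReal_natCast]
      _ ≤ ENNReal.ofReal (1 / (t : ℝ) ^ 2) :=
          ENNReal.ofReal_le_ofReal (natCast_mul_inv_pow_four_le_one_div_sq t)
  calc _ ≤ ∑' t : ℕ, ENNReal.ofReal (1 / (t : ℝ) ^ 2) := ENNReal.tsum_le_tsum hrow
    _ = ENNReal.ofReal (π ^ 2 / 6) := by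
      rw [← ENNReal.ofReal_tsum_of_nonneg (fun t ↦ by positivity) hasSum_zeta_two.summable,
        hasSum_zeta_two.tsum_eq]
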